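/- Fix an integer N ≥ 3 and set θ_i = 2πi/N for i = 0, …, N−1. Let P = {i ∈ {0, …, N−1} : cos θ_i > 0}, let S_c = ∑_{i ∈ P} cos²θ_i, and suppose V₀ > 0, V_i = 0 for i ≠ 0, and 0 < δ < 1/S_c. Define m̄ = V₀/(1 − δ S_c) and the vector r̄ ∈ ℝ^N by r̄_0 = δ m̄ + V₀, r̄_j = δ m̄ cos θ_j for j ∈ P with j ≠ 0, and r̄_j = 0 for j ∉ P. Then m̄ > 0, ∑_j r̄_j cos θ_j = m̄, ∑_j r̄_j sin θ_j = 0, and r̄ is a stationary solution of the N-dimensional ring system: for every i, −r̄_i + F(δ ∑_{j=0}^{N−1} cos(θ_i − θ_j) r̄_j + V_i) = 0. -/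

import Mathlib

/-!
The candidate bump is `r̄ = F(δ m̄ cos θ + V)`, i.e. `r̄_j = δ m̄ max(cos θ_j, 0) + V_j`. Since
`cos (θ_i - θ_j) = cos θ_i cos θ_j + sin θ_i sin θ_j`, the recurrent input to unit `i` is
`δ (m cos θ_i + n sin θ_i)` with `m`, `n` the cosine and sine moments of `r̄`, so stationarity
reduces to `m = m̄` and `n = 0`. The sine moment vanishes because `j ↦ -j` preserves the grid of
angles, leaves `max(cos θ_j, 0)` unchanged and flips `sin θ_j`; the cosine moment equals
`δ m̄ S_c + V₀`, which is `m̄` precisely by the definition of `m̄`.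
-/

open Real

section UniformAngles

variable {N : ℕ} [NeZero N] {θ : Fin N → ℝ}

theorem exists_angle_neg_eq_nat_mul_two_pi_sub (hθ : ∀ i : Fin N, θ i = 2 * π * i / N)
    (j : Fin N) : ∃ k : ℕ, θ (-j) = k * (2 * π) - θ j := by
  have hN : (N : ℝ) ≠ 0 := NeZero.ne _
  rw [hθ, hθ, Fin.val_neg]
  split_ifs with hj
  · exact ⟨0, by simp [hj]⟩
  · refine ⟨1, ?_⟩
    push_cast [Nat.cast_sub j.is_lt.le]
    field_simp

theorem even_cos_angle (hθ : ∀ i : Fin N, θ i = 2 * π * i / N) :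
    Function.Even fun j => cos (θ j) := fun j => by
  obtain ⟨k, hk⟩ := exists_angle_neg_eq_nat_mul_two_pi_sub hθ j
  show cos (θ (-j)) = cos (θ j)
  rw [hk, cos_nat_mul_two_pi_sub]

theorem odd_sin_angle (hθ : ∀ i : Fin N, θ i = 2 * π * i / N) :
    Function.Odd fun j => sin (θ j) := fun j => by
  obtain ⟨k, hk⟩ := exists_angle_neg_eq_nat_mul_two_pi_sub hθ j
  show sin (θ (-j)) = -sin (θ j)
  rw [hk, sin_nat_mul_two_pi_sub]

theorem sum_max_cos_mul_sin_angle (hθ : ∀ i : Fin N, θ i = 2 * π * i / N) :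
    ∑ j, max (cos (θ j)) 0 * sin (θ j) = 0 :=
  (((even_cos_angle hθ).left_comp (max · 0)).mul_odd (odd_sin_angle hθ)).sum_eq_zero

end UniformAngles

theorem sum_cos_sub_mul {ι : Type*} (s : Finset ι) (θ r : ι → ℝ) (x : ℝ) :
    ∑ j ∈ s, cos (x - θ j) * r j =
      cos x * ∑ j ∈ s, r j * cos (θ j) + sin x * ∑ j ∈ s, r j * sin (θ j) := by
  simp only [cos_sub, Finset.mul_sum, ← Finset.sum_add_distrib]
  exact Finset.sum_congr rfl fun j _ => by ring

theorem sum_mul_max_cos_add_mul {ι : Type*} [Fintype ι] {V : ι → ℝ} {i₀ : ι}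
    (hV : ∀ j, j ≠ i₀ → V j = 0) (θ f : ι → ℝ) (a : ℝ) :
    ∑ j, (a * max (cos (θ j)) 0 + V j) * f j =
      a * ∑ j, max (cos (θ j)) 0 * f j + V i₀ * f i₀ := by
  simp only [add_mul, Finset.sum_add_distrib, Finset.mul_sum, mul_assoc]
  congr 1
  exact Fintype.sum_eq_single i₀ fun j hj => by rw [hV j hj, zero_mul]

theorem max_mul_add_eq_mul_max_add {a c v : ℝ} (ha : 0 ≤ a) (hv : 0 ≤ v) (hcv : v = 0 ∨ 0 ≤ c) :
    max (a * c + v) 0 = a * max c 0 + v := by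
  rcases hcv with rfl | hc
  · simp [mul_max_of_nonneg _ _ ha]
  · rw [max_eq_left hc, max_eq_left (by positivity)]

theorem ring_stationary_of_moments {ι : Type*} [Fintype ι] {θ r V : ι → ℝ} {δ m : ℝ}
    (hcos : ∑ j, r j * cos (θ j) = m) (hsin : ∑ j, r j * sin (θ j) = 0)
    (hr : ∀ i, r i = max (δ * m * cos (θ i) + V i) 0) (i : ι) :
    -r i + max (δ * ∑ j, cos (θ i - θ j) * r j + V i) 0 = 0 := by
  rw [sum_cos_sub_mul, hcos, hsin, hr i, mul_zero, add_zero, mul_comm (cos _), mul_assoc]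
  ring

theorem eq_mul_max_cos_add {ι : Type*} {θ r V : ι → ℝ} {P : Finset ι} {i₀ : ι} {a : ℝ}
    (hP : ∀ j, j ∈ P ↔ 0 < cos (θ j)) (hcos₀ : cos (θ i₀) = 1) (hV : ∀ j, j ≠ i₀ → V j = 0)
    (hr₀ : r i₀ = a + V i₀) (hrP : ∀ j ∈ P, j ≠ i₀ → r j = a * cos (θ j))
    (hrN : ∀ j, j ∉ P → r j = 0) (j : ι) :
    r j = a * max (cos (θ j)) 0 + V j := by
  by_cases hj : j ∈ P
  · rw [max_eq_left ((hP j).1 hj).le]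
    obtain rfl | hj₀ := eq_or_ne j i₀
    · rw [hr₀, hcos₀, mul_one]
    · rw [hrP j hj hj₀, hV j hj₀, add_zero]
  · have hj₀ : j ≠ i₀ := by
      rintro rfl
      exact hj ((hP j).2 (hcos₀ ▸ one_pos))
    rw [hrN j hj, hV j hj₀, max_eq_right (not_lt.mp (mt (hP j).2 hj)), mul_zero, add_zero]

theorem sum_cos_sq_eq_sum_max_cos_mul {ι : Type*} [Fintype ι] {θ : ι → ℝ} {P : Finset ι}
    (hP : ∀ j, j ∈ P ↔ 0 < cos (θ j)) :
    ∑ j ∈ P, cos (θ j) ^ 2 = ∑ j, max (cos (θ j)) 0 * cos (θ j) := by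
  rw [← Finset.sum_subset P.subset_univ fun j _ hj => by
    rw [max_eq_right (not_lt.mp (mt (hP j).2 hj)), zero_mul]]
  exact Finset.sum_congr rfl fun j hj => by rw [max_eq_left ((hP j).1 hj).le, sq]

theorem one_le_sum_cos_sq {ι : Type*} {θ : ι → ℝ} {P : Finset ι} {i₀ : ι}
    (hP : ∀ j, j ∈ P ↔ 0 < cos (θ j)) (hcos₀ : cos (θ i₀) = 1) :
    1 ≤ ∑ j ∈ P, cos (θ j) ^ 2 := calc
  1 = cos (θ i₀) ^ 2 := by rw [hcos₀, one_pow]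
  _ ≤ ∑ j ∈ P, cos (θ j) ^ 2 :=
    Finset.single_le_sum (fun j _ => sq_nonneg (cos (θ j))) ((hP i₀).2 (hcos₀ ▸ one_pos))

open Classical in
/-- Existence of the bump stationary solution for the `N`-dimensional ring
system: with `P = {i : cos θ_i > 0}`, `S_c = ∑_{i∈P} cos²θ_i`,
`0 < δ < 1/S_c`, `m̄ = V₀/(1-δS_c)`, and `r̄` defined by `r̄_0 = δm̄ + V₀`,
`r̄_j = δm̄ cos θ_j` for `j ∈ P, j ≠ 0`, and `r̄_j = 0` otherwise, one has
`m̄ > 0`, `∑ r̄_j cos θ_j = m̄`, `∑ r̄_j sin θ_j = 0`, and `r̄` is a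
stationary solution. -/
theorem stmt13 (N : ℕ) (hN : 3 ≤ N) (δ V₀ : ℝ) (hV₀ : 0 < V₀)
    (θ : Fin N → ℝ) (hθ : ∀ i : Fin N, θ i = 2 * π * i / N)
    (V : Fin N → ℝ) (hV0 : V ⟨0, by omega⟩ = V₀)
    (hVi : ∀ i : Fin N, i ≠ ⟨0, by omega⟩ → V i = 0)
    (P : Finset (Fin N))
    (hP : P = Finset.univ.filter fun i => 0 < Real.cos (θ i))
    (Sc : ℝ) (hSc : Sc = ∑ i ∈ P, Real.cos (θ i) ^ 2)
    (hδ0 : 0 < δ) (hδ : δ < 1 / Sc)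
    (m : ℝ) (hm : m = V₀ / (1 - δ * Sc))
    (rb : Fin N → ℝ)
    (hrb0 : rb ⟨0, by omega⟩ = δ * m + V₀)
    (hrbP : ∀ j ∈ P, j ≠ (⟨0, by omega⟩ : Fin N) → rb j = δ * m * Real.cos (θ j))
    (hrbN : ∀ j : Fin N, j ∉ P → rb j = 0) :
    0 < m ∧
    (∑ j, rb j * Real.cos (θ j)) = m ∧
    (∑ j, rb j * Real.sin (θ j)) = 0 ∧
    ∀ i : Fin N,
      -rb i + max (δ * ∑ j, Real.cos (θ i - θ j) * rb j + V i) 0 = 0 := by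
  have : NeZero N := ⟨by omega⟩
  have h0 : (⟨0, by omega⟩ : Fin N) = 0 := Fin.ext (Nat.zero_mod N).symm
  rw [h0] at hV0 hVi hrb0 hrbP
  have hcos0 : cos (θ 0) = 1 := by simp [hθ]
  have hmemP : ∀ j, j ∈ P ↔ 0 < cos (θ j) := by simp [hP]
  have hr := eq_mul_max_cos_add hmemP hcos0 hVi (by rw [hrb0, hV0]) hrbP hrbN
  have hSc_pos : 0 < Sc := hSc ▸ one_pos.trans_le (one_le_sum_cos_sq hmemP hcos0)
  have hδSc : δ * Sc < 1 := (lt_div_iff₀ hSc_pos).mp hδ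
  have hm_pos : 0 < m := hm ▸ div_pos hV₀ (sub_pos.mpr hδSc)
  have hcos : ∑ j, rb j * cos (θ j) = m := by
    simp only [hr]
    rw [sum_mul_max_cos_add_mul hVi, ← sum_cos_sq_eq_sum_max_cos_mul hmemP, ← hSc, hV0, hcos0]
    have hm' : m * (1 - δ * Sc) = V₀ := by rw [hm, div_mul_cancel₀ _ (sub_pos.mpr hδSc).ne']
    linear_combination -hm'
  have hsin : ∑ j, rb j * sin (θ j) = 0 := by
    simp only [hr]
    rw [sum_mul_max_cos_add_mul hVi, sum_max_cos_mul_sin_angle hθ, hθ 0]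
    simp
  refine ⟨hm_pos, hcos, hsin, ring_stationary_of_moments hcos hsin fun i => ?_⟩
  have hδm : 0 ≤ δ * m := by positivity
  rw [hr i]
  obtain rfl | hi := eq_or_ne i 0
  · rw [hV0, hcos0, max_mul_add_eq_mul_max_add hδm hV₀.le (Or.inr zero_le_one)]
  · rw [hVi i hi, max_mul_add_eq_mul_max_add hδm le_rfl (Or.inl rfl)]
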